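/- arXiv:2106.15869 — 3 statements merged into one kernel-verified Lean document; each statement's English description precedes it below -/
import Mathlib

section
/- For a, b ∈ ℝ, δ > 0, f > 0, the Godunov upwind equation ((u-a)⁺/δ)² + ((u-b)⁺/δ)² = 1/f² has a unique solution u with u > min(a,b). -/
/-!
The left-hand side is a continuous function of `u` that vanishes at `m = min a b`, is strictly
increasing on `[m, ∞)` (the term of the smaller neighbour is, the other one never decreases), and
already reaches `1 / f ^ 2` at `m + δ / f`. The intermediate value theorem gives a solution in
`(m, m + δ / f]`, and strict monotonicity makes it the only one above `m`.
-/

open Set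

lemma existsUnique_gt_of_strictMonoOn {g : ℝ → ℝ} {c d y : ℝ} (hcd : c ≤ d)
    (hmono : StrictMonoOn g (Ici c)) (hcont : ContinuousOn g (Icc c d)) (hc : g c < y)
    (hd : y ≤ g d) : ∃! u, c < u ∧ g u = y := by
  obtain ⟨u, ⟨hcu, -⟩, hu⟩ := intermediate_value_Ioc hcd hcont ⟨hc, hd⟩
  refine ⟨u, ⟨hcu, hu⟩, fun v ⟨hcv, hv⟩ => ?_⟩
  exact hmono.injOn (mem_Ici.mpr hcv.le) (mem_Ici.mpr hcu.le) (hv.trans hu.symm)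

noncomputable def upwindTerm (c δ u : ℝ) : ℝ := (max (u - c) 0 / δ) ^ 2

namespace upwindTerm

variable (c : ℝ)

lemma continuous (δ : ℝ) : Continuous (upwindTerm c δ) := by
  unfold upwindTerm
  fun_prop

lemma nonneg (δ u : ℝ) : 0 ≤ upwindTerm c δ u := sq_nonneg _

lemma eq_zero_of_le (δ : ℝ) {u : ℝ} (hu : u ≤ c) : upwindTerm c δ u = 0 := by
  simp [upwindTerm, hu]

lemma monotone (δ : ℝ) : Monotone (upwindTerm c δ) := by
  intro u v huv
  simp only [upwindTerm, div_pow]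
  gcongr

lemma strictMonoOn {δ : ℝ} (hδ : δ ≠ 0) : StrictMonoOn (upwindTerm c δ) (Ici c) := by
  intro u hu v hv huv
  rw [mem_Ici, ← sub_nonneg] at hu hv
  simp only [upwindTerm, div_pow, max_eq_left hu, max_eq_left hv]
  gcongr

lemma add_div_eq {δ f : ℝ} (hδ : 0 < δ) (hf : 0 < f) :
    upwindTerm c δ (c + δ / f) = 1 / f ^ 2 := by
  rw [upwindTerm, add_sub_cancel_left, max_eq_left (by positivity)]
  field_simp

end upwindTerm

lemma strictMonoOn_upwindTerm_add {a b δ : ℝ} (hδ : δ ≠ 0) :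
    StrictMonoOn (fun u => upwindTerm a δ u + upwindTerm b δ u) (Ici (min a b)) := by
  rcases min_choice a b with h | h <;> rw [h]
  · exact (upwindTerm.strictMonoOn a hδ).add_monotone ((upwindTerm.monotone b δ).monotoneOn _)
  · exact ((upwindTerm.monotone a δ).monotoneOn _).add_strictMono (upwindTerm.strictMonoOn b hδ)

lemma le_upwindTerm_add {a b δ f : ℝ} (hδ : 0 < δ) (hf : 0 < f) :
    1 / f ^ 2 ≤ upwindTerm a δ (min a b + δ / f) + upwindTerm b δ (min a b + δ / f) := by
  rcases min_choice a b with h | h <;> rw [h, upwindTerm.add_div_eq _ hδ hf]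
  · exact le_add_of_nonneg_right (upwindTerm.nonneg _ _ _)
  · exact le_add_of_nonneg_left (upwindTerm.nonneg _ _ _)

/-- Existence and uniqueness of the solution of the 2D Godunov upwind equation
exceeding the smaller neighbor value. -/
theorem stmt_3 (a b δ f : ℝ) (hδ : 0 < δ) (hf : 0 < f) :
    ∃! u : ℝ, u > min a b ∧
      (max (u - a) 0 / δ) ^ 2 + (max (u - b) 0 / δ) ^ 2 = 1 / f ^ 2 := by
  have hzero : upwindTerm a δ (min a b) + upwindTerm b δ (min a b) = 0 := by
    rw [upwindTerm.eq_zero_of_le _ _ (min_le_left a b),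
      upwindTerm.eq_zero_of_le _ _ (min_le_right a b), add_zero]
  exact existsUnique_gt_of_strictMonoOn (le_add_of_nonneg_right (by positivity))
    (strictMonoOn_upwindTerm_add hδ.ne')
    ((upwindTerm.continuous a δ).add (upwindTerm.continuous b δ)).continuousOn
    (hzero.trans_lt (by positivity)) (le_upwindTerm_add hδ hf)
end

section
/- The solution u(a,b) of the 2D Godunov upwind equation ((u-a)⁺)² + ((u-b)⁺)² = δ²/f² (with u > min(a,b)) is monotone nondecreasing in each of the neighbor values a and b. -/
/-!
The left-hand side `G a b u = ((u - a)⁺)² + ((u - b)⁺)²` is nondecreasing in `u` and nonincreasing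
in `a` and `b`, and it is strictly increasing in `u` as soon as `u > min a b`, because then one of
the two positive parts is active. So `u₂ < u₁` would give `G a₂ b₂ u₂ < G a₁ b₁ u₁`, although both
equal `δ² / f²`.
-/

def godunovLhs (a b u : ℝ) : ℝ := max (u - a) 0 ^ 2 + max (u - b) 0 ^ 2

lemma sq_max_zero_le_sq_max_zero {x y : ℝ} (h : x ≤ y) : max x 0 ^ 2 ≤ max y 0 ^ 2 :=
  pow_le_pow_left₀ (le_max_right _ _) (max_le_max_right 0 h) 2

lemma sq_max_zero_lt_sq_max_zero {x y : ℝ} (hx : 0 < x) (h : x < y) :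
    max x 0 ^ 2 < max y 0 ^ 2 := by
  rw [max_eq_left hx.le, max_eq_left (hx.trans h).le]
  exact pow_lt_pow_left₀ h hx.le two_ne_zero

lemma godunovLhs_lt_godunovLhs {a₁ b₁ a₂ b₂ u₁ u₂ : ℝ} (ha : a₁ ≤ a₂) (hb : b₁ ≤ b₂)
    (hu₂ : min a₂ b₂ < u₂) (hu : u₂ < u₁) : godunovLhs a₂ b₂ u₂ < godunovLhs a₁ b₁ u₁ := by
  have hA : u₂ - a₂ < u₁ - a₁ := by linarith
  have hB : u₂ - b₂ < u₁ - b₁ := by linarith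
  rcases min_lt_iff.mp hu₂ with h | h
  · exact add_lt_add_of_lt_of_le (sq_max_zero_lt_sq_max_zero (sub_pos.mpr h) hA)
      (sq_max_zero_le_sq_max_zero hB.le)
  · exact add_lt_add_of_le_of_lt (sq_max_zero_le_sq_max_zero hA.le)
      (sq_max_zero_lt_sq_max_zero (sub_pos.mpr h) hB)

theorem stmt_4_general (δ f : ℝ)
    (a₁ b₁ a₂ b₂ u₁ u₂ : ℝ) (ha : a₁ ≤ a₂) (hb : b₁ ≤ b₂)
    (hu₁ : u₁ > min a₁ b₁ ∧
      (max (u₁ - a₁) 0) ^ 2 + (max (u₁ - b₁) 0) ^ 2 = δ ^ 2 / f ^ 2)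
    (hu₂ : u₂ > min a₂ b₂ ∧
      (max (u₂ - a₂) 0) ^ 2 + (max (u₂ - b₂) 0) ^ 2 = δ ^ 2 / f ^ 2) :
    u₁ ≤ u₂ := by
  by_contra! hu
  have hlt : godunovLhs a₂ b₂ u₂ < godunovLhs a₁ b₁ u₁ :=
    godunovLhs_lt_godunovLhs ha hb hu₂.1 hu
  rw [godunovLhs, godunovLhs, hu₁.2, hu₂.2] at hlt
  exact lt_irrefl _ hlt

/-- Monotonicity of the 2D Godunov local solver in the neighbor values. -/
theorem stmt_4 (δ f : ℝ) (hδ : 0 < δ) (hf : 0 < f)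
    (a₁ b₁ a₂ b₂ u₁ u₂ : ℝ) (ha : a₁ ≤ a₂) (hb : b₁ ≤ b₂)
    (hu₁ : u₁ > min a₁ b₁ ∧
      (max (u₁ - a₁) 0) ^ 2 + (max (u₁ - b₁) 0) ^ 2 = δ ^ 2 / f ^ 2)
    (hu₂ : u₂ > min a₂ b₂ ∧
      (max (u₂ - a₂) 0) ^ 2 + (max (u₂ - b₂) 0) ^ 2 = δ ^ 2 / f ^ 2) :
    u₁ ≤ u₂ :=
  stmt_4_general δ f a₁ b₁ a₂ b₂ u₁ u₂ ha hb hu₁ hu₂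
end

section
/- For any sorted neighbor values a₁ ≤ a₂ ≤ a₃, δ > 0, f > 0, the equation ((u-a₁)⁺)² + ((u-a₂)⁺)² + ((u-a₃)⁺)² = δ²/f² has a unique solution u with u > a₁, and it satisfies a₁ < u ≤ a₁ + δ/f. -/
/-!
The map `u ↦ ∑ᵢ ((u - aᵢ)⁺)²` is continuous and vanishes at `m = min a`; on `u ≥ m` it is
strictly increasing, because the term of the smallest `aᵢ` is `(u - m)²`. That term alone
reaches `r²` at `u = m + r`, so the intermediate value theorem gives a solution in `(m, m + r]`,
and strict monotonicity makes it unique.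
-/

open Finset

section Godunov

variable {ι : Type*} (s : Finset ι) (a : ι → ℝ)

def godunovSum (u : ℝ) : ℝ := ∑ j ∈ s, max (u - a j) 0 ^ 2

theorem continuous_godunovSum : Continuous (godunovSum s a) := by
  unfold godunovSum
  fun_prop

variable {s a}

theorem godunovSum_eq_zero {u : ℝ} (hu : ∀ j ∈ s, u ≤ a j) : godunovSum s a u = 0 :=
  sum_eq_zero fun j hj => by rw [max_eq_right (sub_nonpos.2 (hu j hj))]; norm_num

theorem sq_sub_le_godunovSum {i : ι} (hi : i ∈ s) {u : ℝ} (hu : a i ≤ u) :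
    (u - a i) ^ 2 ≤ godunovSum s a u := by
  have hterm : max (u - a i) 0 ^ 2 = (u - a i) ^ 2 := by rw [max_eq_left (sub_nonneg.2 hu)]
  rw [← hterm]
  exact single_le_sum (f := fun j => max (u - a j) 0 ^ 2) (fun j _ => sq_nonneg _) hi

theorem strictMonoOn_godunovSum {i : ι} (hi : i ∈ s) :
    StrictMonoOn (godunovSum s a) (Set.Ici (a i)) := by
  intro x (hx : a i ≤ x) y _ hxy
  refine sum_lt_sum (fun j _ => ?_) ⟨i, hi, ?_⟩
  · exact pow_le_pow_left₀ (le_max_right _ _) (max_le_max_right _ (by linarith)) 2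
  · rw [max_eq_left (by linarith), max_eq_left (by linarith)]
    exact pow_lt_pow_left₀ (by linarith) (sub_nonneg.2 hx) two_ne_zero

theorem le_add_of_godunovSum_eq {i : ι} (hi : i ∈ s) {u r : ℝ} (hu : a i ≤ u) (hr : 0 ≤ r)
    (h : godunovSum s a u = r ^ 2) : u ≤ a i + r := by
  have := pow_le_pow_iff_left₀ (sub_nonneg.2 hu) hr two_ne_zero |>.1
    (h ▸ sq_sub_le_godunovSum hi hu)
  linarith

theorem existsUnique_godunovSum_eq {i : ι} (hi : i ∈ s) (hmin : ∀ j ∈ s, a i ≤ a j)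
    {r : ℝ} (hr : 0 < r) : ∃! u, a i < u ∧ godunovSum s a u = r ^ 2 := by
  have hzero : godunovSum s a (a i) = 0 := godunovSum_eq_zero hmin
  have hend : r ^ 2 ≤ godunovSum s a (a i + r) := by
    have := sq_sub_le_godunovSum (a := a) hi (le_add_of_nonneg_right hr.le)
    rwa [add_sub_cancel_left] at this
  obtain ⟨u, ⟨hlo, -⟩, hu⟩ := intermediate_value_Icc (by linarith)
    (continuous_godunovSum s a).continuousOn ⟨hzero ▸ (sq_nonneg r), hend⟩
  have hne : a i ≠ u := by
    rintro rfl
    exact (pow_pos hr 2).ne' (hu ▸ hzero)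
  refine ⟨u, ⟨lt_of_le_of_ne hlo hne, hu⟩, fun v ⟨hv, hvu⟩ => ?_⟩
  exact (strictMonoOn_godunovSum hi).injOn (Set.mem_Ici.2 hv.le) (Set.mem_Ici.2 hlo)
    (hvu.trans hu.symm)

end Godunov

/-- Existence, uniqueness and bounds for the 3D Godunov upwind local solver. -/
theorem stmt_13 (a₁ a₂ a₃ δ f : ℝ) (h12 : a₁ ≤ a₂) (h23 : a₂ ≤ a₃)
    (hδ : 0 < δ) (hf : 0 < f) :
    (∃! u : ℝ, u > a₁ ∧
      (max (u - a₁) 0) ^ 2 + (max (u - a₂) 0) ^ 2 + (max (u - a₃) 0) ^ 2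
        = δ ^ 2 / f ^ 2) ∧
    (∀ u : ℝ, u > a₁ →
      (max (u - a₁) 0) ^ 2 + (max (u - a₂) 0) ^ 2 + (max (u - a₃) 0) ^ 2
        = δ ^ 2 / f ^ 2 → a₁ < u ∧ u ≤ a₁ + δ / f) := by
  have hsum (u : ℝ) : godunovSum univ ![a₁, a₂, a₃] u =
      (max (u - a₁) 0) ^ 2 + (max (u - a₂) 0) ^ 2 + (max (u - a₃) 0) ^ 2 := by
    simp [godunovSum, Fin.sum_univ_three]
  have hmin : ∀ j ∈ univ, ![a₁, a₂, a₃] 0 ≤ ![a₁, a₂, a₃] j := by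
    intro j _
    fin_cases j <;> simp <;> linarith
  simp only [← hsum, ← div_pow]
  exact ⟨existsUnique_godunovSum_eq (mem_univ 0) hmin (by positivity),
    fun u hu h => ⟨hu, le_add_of_godunovSum_eq (mem_univ 0) hu.le (by positivity) h⟩⟩
end
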